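/- arXiv:1610.04639 — 2 statements merged into one kernel-verified Lean document; each statement's English description precedes it below -/
import Mathlib

section
/- Let L_n, L be closed subspaces of a Hilbert space H with orthogonal projections Π_n, Π, and v^{(n)}, v nonzero vectors with v ∉ L. If Π_n → Π in the strong operator topology and v^{(n)} → v in H, then the orthogonal projections onto L_n + ℂ v^{(n)} converge in the strong operator topology to the orthogonal projection onto L ⊕ ℂ v. -/
/-! Write `w = u - Π_K u` for the component of `u` orthogonal to `K`. Then `K ⊔ ℂ u = K ⊕ ℂ w`
is an orthogonal sum, so `Π_{K ⊔ ℂ u} x = Π_K x + (⟪w, x⟫ / ‖w‖²) w`. Since the projections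
`Π_n` have norm at most one, `Π_n v_n → Π v` and hence `w_n → w`, and `w ≠ 0` because `v ∉ L`;
the rank-one term is continuous in `w` away from `0`. -/

open ContinuousLinearMap Filter MeasureTheory
open scoped NNReal ENNReal Topology

noncomputable section

variable {H : Type*} [NormedAddCommGroup H] [InnerProductSpace ℂ H] [CompleteSpace H]
variable {ι : Type*}

/-- `T` is Hilbert–Schmidt w.r.t. the Hilbert basis `e`. -/
def IsHS (e : HilbertBasis ι ℂ H) (T : H →L[ℂ] H) : Prop :=
  Summable fun i => ‖T (e i)‖ ^ 2

/-- Hilbert–Schmidt norm of `T` w.r.t. the Hilbert basis `e`. -/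
noncomputable def hsNorm (e : HilbertBasis ι ℂ H) (T : H →L[ℂ] H) : ℝ :=
  Real.sqrt (∑' i, ‖T (e i)‖ ^ 2)

/-- Trace of `T` w.r.t. the Hilbert basis `e`. -/
noncomputable def opTrace (e : HilbertBasis ι ℂ H) (T : H →L[ℂ] H) : ℂ :=
  ∑' i, (inner ℂ (e i : H) (T (e i)) : ℂ)

/-- `T` is trace class: it is a product of two Hilbert–Schmidt operators. -/
def IsTraceClass (e : HilbertBasis ι ℂ H) (T : H →L[ℂ] H) : Prop :=
  ∃ A B : H →L[ℂ] H, IsHS e A ∧ IsHS e B ∧ T = adjoint A ∘L B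

/-- Trace norm `tr √(T* T)` w.r.t. the Hilbert basis `e`. -/
noncomputable def traceNorm (e : HilbertBasis ι ℂ H) (T : H →L[ℂ] H) : ℝ :=
  ∑' i, ((inner ℂ (e i : H) ((CFC.sqrt (adjoint T * T)) (e i)) : ℂ)).re

/-- The orthogonal projection onto `K`, as an operator `H →L[ℂ] H`. -/
noncomputable def projCLM (K : Submodule ℂ H) [Submodule.HasOrthogonalProjection K] : H →L[ℂ] H :=
  K.subtypeL ∘L K.orthogonalProjectionOnto

namespace Submodule

variable {𝕜 E : Type*} [RCLike 𝕜] [NormedAddCommGroup E] [InnerProductSpace 𝕜 E]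

theorem IsOrtho.starProjection_sup_apply {U V : Submodule 𝕜 E} (h : U ⟂ V)
    [U.HasOrthogonalProjection] [V.HasOrthogonalProjection] [(U ⊔ V).HasOrthogonalProjection]
    (x : E) : (U ⊔ V).starProjection x = U.starProjection x + V.starProjection x := by
  refine eq_starProjection_of_mem_orthogonal
    (add_mem (mem_sup_left (starProjection_apply_mem U x))
      (mem_sup_right (starProjection_apply_mem V x))) ?_
  rw [← inf_orthogonal, mem_inf]
  constructor
  · simpa only [sub_add_eq_sub_sub] using
      sub_mem (sub_starProjection_mem_orthogonal x) (h.symm.le (starProjection_apply_mem V x))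
  · simpa only [sub_add_eq_sub_sub_swap] using
      sub_mem (sub_starProjection_mem_orthogonal x) (h.le (starProjection_apply_mem U x))

theorem sup_span_singleton_eq_sup_span_sub_starProjection (K : Submodule 𝕜 E)
    [K.HasOrthogonalProjection] (u : E) :
    K ⊔ 𝕜 ∙ u = K ⊔ 𝕜 ∙ (u - K.starProjection u) := by
  have hP : K.starProjection u ∈ K := starProjection_apply_mem K u
  apply le_antisymm <;> refine sup_le le_sup_left ((span_singleton_le_iff_mem _ _).2 ?_)
  · simpa only [add_sub_cancel] using
      add_mem (mem_sup_left hP) (mem_sup_right (mem_span_singleton_self (u - K.starProjection u)))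
  · exact sub_mem (mem_sup_right (mem_span_singleton_self u)) (mem_sup_left hP)

theorem starProjection_sup_span_singleton_apply (K : Submodule 𝕜 E) [K.HasOrthogonalProjection]
    (u : E) [(K ⊔ 𝕜 ∙ u).HasOrthogonalProjection] (x : E) :
    (K ⊔ 𝕜 ∙ u).starProjection x
      = K.starProjection x + (𝕜 ∙ (u - K.starProjection u)).starProjection x := by
  have hK : K ⟂ 𝕜 ∙ (u - K.starProjection u) :=
    isOrtho_iff_le.2 ((span_singleton_le_iff_mem _ _).2 (sub_starProjection_mem_orthogonal u))
      |>.symm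
  have hsup := K.sup_span_singleton_eq_sup_span_sub_starProjection u
  have : (K ⊔ 𝕜 ∙ (u - K.starProjection u)).HasOrthogonalProjection := hsup ▸ inferInstance
  convert hK.starProjection_sup_apply x using 3

end Submodule

section Convergence

open Submodule

variable {𝕜 E ι : Type*} [RCLike 𝕜] [NormedAddCommGroup E] [InnerProductSpace 𝕜 E]
  {l : Filter ι}

theorem tendsto_starProjection_apply_of_tendsto {K : ι → Submodule 𝕜 E}
    [∀ i, (K i).HasOrthogonalProjection] {K' : Submodule 𝕜 E} [K'.HasOrthogonalProjection]
    (hK : ∀ x, Tendsto (fun i => (K i).starProjection x) l (𝓝 (K'.starProjection x)))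
    {u : ι → E} {u' : E} (hu : Tendsto u l (𝓝 u')) :
    Tendsto (fun i => (K i).starProjection (u i)) l (𝓝 (K'.starProjection u')) := by
  have hsmall : Tendsto (fun i => (K i).starProjection (u i - u')) l (𝓝 0) :=
    squeeze_zero_norm (fun i => norm_starProjection_apply_le _ _)
      (tendsto_iff_norm_sub_tendsto_zero.1 hu)
  simpa only [map_sub, sub_add_cancel, zero_add] using hsmall.add (hK u')

theorem tendsto_starProjection_span_singleton_apply {w : ι → E} {w' : E}
    (hw : Tendsto w l (𝓝 w')) (hw' : w' ≠ 0) (x : E) :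
    Tendsto (fun i => (𝕜 ∙ w i).starProjection x) l (𝓝 ((𝕜 ∙ w').starProjection x)) := by
  simp only [starProjection_singleton]
  have hnorm : Tendsto (fun i => ((‖w i‖ ^ 2 : ℝ) : 𝕜)) l (𝓝 ((‖w'‖ ^ 2 : ℝ) : 𝕜)) :=
    (RCLike.continuous_ofReal.tendsto _).comp (hw.norm.pow 2)
  exact ((hw.inner tendsto_const_nhds).div hnorm (by simpa using hw')).smul hw

end Convergence

omit [CompleteSpace H] in
theorem projCLM_eq_starProjection (K : Submodule ℂ H) [K.HasOrthogonalProjection] :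
    projCLM K = K.starProjection := rfl

theorem stmt5_general (L : ℕ → Submodule ℂ H) [∀ n, Submodule.HasOrthogonalProjection (L n)]
    (L' : Submodule ℂ H) [Submodule.HasOrthogonalProjection L']
    (v : ℕ → H) (v' : H)
    [∀ n, Submodule.HasOrthogonalProjection (L n ⊔ Submodule.span ℂ {v n})]
    [Submodule.HasOrthogonalProjection (L' ⊔ Submodule.span ℂ {v'})]
    (hvL : v' ∉ L')
    (hstrong : ∀ x : H, Tendsto (fun n => projCLM (L n) x) atTop (𝓝 (projCLM L' x)))
    (hvconv : Tendsto v atTop (𝓝 v')) :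
    ∀ x : H,
      Tendsto (fun n => projCLM (L n ⊔ Submodule.span ℂ {v n}) x) atTop
        (𝓝 (projCLM (L' ⊔ Submodule.span ℂ {v'}) x)) := by
  intro x
  simp only [projCLM_eq_starProjection] at hstrong ⊢
  simp only [Submodule.starProjection_sup_span_singleton_apply]
  have hw' : v' - L'.starProjection v' ≠ 0 :=
    sub_ne_zero.2 fun h => hvL (h ▸ L'.starProjection_apply_mem v')
  have hw := hvconv.sub (tendsto_starProjection_apply_of_tendsto hstrong hvconv)
  exact (hstrong x).add (tendsto_starProjection_span_singleton_apply hw hw' x)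

/-- if the projections onto `Ln` converge strongly to the projection onto `L`
and `vn -> v` with `v ∉ L`, then the orthogonal projections onto `Ln + ℂ vn` converge
strongly to the orthogonal projection onto `L ⊕ ℂ v`. -/
theorem stmt5 (L : ℕ → Submodule ℂ H) [∀ n, Submodule.HasOrthogonalProjection (L n)]
    (L' : Submodule ℂ H) [Submodule.HasOrthogonalProjection L']
    (v : ℕ → H) (v' : H)
    [∀ n, Submodule.HasOrthogonalProjection (L n ⊔ Submodule.span ℂ {v n})]
    [Submodule.HasOrthogonalProjection (L' ⊔ Submodule.span ℂ {v'})]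
    (hv : ∀ n, v n ≠ 0) (hv' : v' ≠ 0) (hvL : v' ∉ L')
    (hstrong : ∀ x : H, Tendsto (fun n => projCLM (L n) x) atTop (𝓝 (projCLM L' x)))
    (hvconv : Tendsto v atTop (𝓝 v')) :
    ∀ x : H,
      Tendsto (fun n => projCLM (L n ⊔ Submodule.span ℂ {v n}) x) atTop
        (𝓝 (projCLM (L' ⊔ Submodule.span ℂ {v'}) x)) :=
  stmt5_general L L' v v' hvL hstrong hvconv
end
end

section
/- Let L be a closed subspace of a Hilbert space H and v_1, …, v_m vectors such that v_k ∉ L ⊕ ℂv_1 ⊕ ⋯ ⊕ ℂv_{k-1} for each k = 1, …, m. Let L_n be closed subspaces with projections Π_n → Π (projection onto L) strongly, and v_i^{(n)} → v_i in H for each i. Then the orthogonal projections onto L_n + span{v_1^{(n)}, …, v_m^{(n)}} converge strongly to the orthogonal projection onto L ⊕ ℂv_1 ⊕ ⋯ ⊕ ℂv_m. -/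
open ContinuousLinearMap Filter MeasureTheory
open scoped NNReal ENNReal Topology

noncomputable section

variable {H : Type*} [NormedAddCommGroup H] [InnerProductSpace ℂ H] [CompleteSpace H]
variable {ι : Type*}

/-! Adjoining a vector `u ∉ K` to a subspace `K` adds to `P_K` the rank-one projection onto
`w = u - P_K u`, which is orthogonal to `K` and nonzero:
`P_{K ⊔ ℂu} x = P_K x + (⟪w, x⟫ / ‖w‖²) w`. Strong convergence `P_{K_n} → P_K` together with
`u_n → u` gives `w_n → w`, hence `P_{K_n ⊔ ℂu_n} → P_{K ⊔ ℂu}` strongly as long as `w ≠ 0`.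
Adjoining `v_1, …, v_m` one at a time, the hypothesis `v_k ∉ L ⊕ ℂv_1 ⊕ ⋯ ⊕ ℂv_{k-1}` is exactly
what keeps the limit vector `w` nonzero at each step. -/

namespace Submodule

instance finiteDimensional_span_of_finite {K V : Type*} [DivisionRing K] [AddCommGroup V]
    [Module K V] (s : Set V) [Finite s] : FiniteDimensional K (span K s) :=
  FiniteDimensional.span_of_finite K s.toFinite

variable {𝕜 E : Type*} [RCLike 𝕜] [NormedAddCommGroup E] [InnerProductSpace 𝕜 E]

instance HasOrthogonalProjection.sup_of_finiteDimensional [CompleteSpace E]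
    (K M : Submodule 𝕜 E) [K.HasOrthogonalProjection] [FiniteDimensional 𝕜 M] :
    (K ⊔ M).HasOrthogonalProjection := by
  have hK : IsClosed (K : Set E) := K.orthogonal_orthogonal ▸ Kᗮ.isClosed_orthogonal
  have : CompleteSpace ↥(K ⊔ M) := (K.isClosed_sup_finiteDimensional M hK).completeSpace_coe
  infer_instance

theorem IsOrtho.sub_starProjection_sub_starProjection_mem_orthogonal {K M : Submodule 𝕜 E}
    [K.HasOrthogonalProjection] [M.HasOrthogonalProjection] (h : K ⟂ M) (x : E) :
    x - K.starProjection x - M.starProjection x ∈ (K ⊔ M)ᗮ := by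
  rw [← inf_orthogonal]
  constructor
  · exact sub_mem (K.sub_starProjection_mem_orthogonal x)
      (h.symm.le (M.starProjection_apply_mem x))
  · rw [sub_right_comm]
    exact sub_mem (M.sub_starProjection_mem_orthogonal x) (h.le (K.starProjection_apply_mem x))

theorem sup_span_singleton_sub_of_mem {K : Submodule 𝕜 E} {k : E} (hk : k ∈ K) (u : E) :
    K ⊔ 𝕜 ∙ (u - k) = K ⊔ 𝕜 ∙ u := by
  apply le_antisymm <;> refine sup_le le_sup_left ((span_singleton_le_iff_mem _ _).2 ?_)
  · exact sub_mem (mem_sup_right (mem_span_singleton_self u)) (mem_sup_left hk)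
  · simpa using add_mem (mem_sup_right (mem_span_singleton_self (u - k))) (mem_sup_left hk)

theorem sup_span_image_lt_succ {m : ℕ} (K : Submodule 𝕜 E) (f : Fin m → E) {k : ℕ}
    (hk : k < m) :
    K ⊔ span 𝕜 (f '' {i | (i : ℕ) < k + 1}) =
      K ⊔ span 𝕜 (f '' {i | (i : ℕ) < k}) ⊔ 𝕜 ∙ f ⟨k, hk⟩ := by
  have : {i : Fin m | (i : ℕ) < k + 1} = insert ⟨k, hk⟩ {i : Fin m | (i : ℕ) < k} := by
    ext i
    simp only [Set.mem_ofPred_eq, Set.mem_insert_iff, Fin.ext_iff]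
    omega
  rw [this, Set.image_insert_eq, span_insert, sup_comm (𝕜 ∙ _), sup_assoc]

end Submodule

section StrongConvergence

open Submodule

variable {𝕜 E α : Type*} [RCLike 𝕜] [NormedAddCommGroup E] [InnerProductSpace 𝕜 E] {l : Filter α}
  {K : α → Submodule 𝕜 E} [∀ n, (K n).HasOrthogonalProjection]
  {K' : Submodule 𝕜 E} [K'.HasOrthogonalProjection]

theorem tendsto_starProjection_apply_of_tendsto_s6
    (hK : ∀ x, Tendsto (fun n => (K n).starProjection x) l (𝓝 (K'.starProjection x)))
    {y : α → E} {y' : E} (hy : Tendsto y l (𝓝 y')) :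
    Tendsto (fun n => (K n).starProjection (y n)) l (𝓝 (K'.starProjection y')) := by
  have h0 : Tendsto (fun n => (K n).starProjection (y n - y')) l (𝓝 0) :=
    squeeze_zero_norm (fun n => norm_starProjection_apply_le _ _)
      (tendsto_iff_norm_sub_tendsto_zero.1 hy)
  simpa [map_sub] using h0.add (hK y')

theorem tendsto_starProjection_sup_span_singleton_apply
    (hK : ∀ x, Tendsto (fun n => (K n).starProjection x) l (𝓝 (K'.starProjection x)))
    {u : α → E} {u' : E} [∀ n, (K n ⊔ 𝕜 ∙ u n).HasOrthogonalProjection]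
    [(K' ⊔ 𝕜 ∙ u').HasOrthogonalProjection] (hu : Tendsto u l (𝓝 u')) (hu' : u' ∉ K') (x : E) :
    Tendsto (fun n => (K n ⊔ 𝕜 ∙ u n).starProjection x) l
      (𝓝 ((K' ⊔ 𝕜 ∙ u').starProjection x)) := by
  simp only [starProjection_sup_span_singleton_apply, starProjection_singleton]
  have hw : Tendsto (fun n => u n - (K n).starProjection (u n)) l
      (𝓝 (u' - K'.starProjection u')) :=
    hu.sub (tendsto_starProjection_apply_of_tendsto_s6 hK hu)
  have hw' : u' - K'.starProjection u' ≠ 0 :=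
    sub_ne_zero.2 fun h => hu' (h ▸ K'.starProjection_apply_mem u')
  have hnorm := ((RCLike.continuous_ofReal (K := 𝕜)).tendsto _).comp (hw.norm.pow 2)
  refine (hK x).add (((hw.inner tendsto_const_nhds).div hnorm ?_).smul hw)
  simpa using hw'

end StrongConvergence

/-- finite-rank version of STATEMENT 5 for `m` perturbing vectors. -/
theorem stmt6 {m : ℕ} (L : ℕ → Submodule ℂ H) [∀ n, Submodule.HasOrthogonalProjection (L n)]
    (L' : Submodule ℂ H) [Submodule.HasOrthogonalProjection L']
    (v : ℕ → Fin m → H) (v' : Fin m → H)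
    [∀ n, Submodule.HasOrthogonalProjection (L n ⊔ Submodule.span ℂ (Set.range (v n)))]
    [Submodule.HasOrthogonalProjection (L' ⊔ Submodule.span ℂ (Set.range v'))]
    (hindep : ∀ k : Fin m, v' k ∉ L' ⊔ Submodule.span ℂ (v' '' {i | i < k}))
    (hstrong : ∀ x : H, Tendsto (fun n => projCLM (L n) x) atTop (𝓝 (projCLM L' x)))
    (hvconv : ∀ i : Fin m, Tendsto (fun n => v n i) atTop (𝓝 (v' i))) :
    ∀ x : H,
      Tendsto (fun n => projCLM (L n ⊔ Submodule.span ℂ (Set.range (v n))) x) atTop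
        (𝓝 (projCLM (L' ⊔ Submodule.span ℂ (Set.range v')) x)) := by
  have hprefix : ∀ k ≤ m, ∀ x : H,
      Tendsto (fun n => projCLM (L n ⊔ Submodule.span ℂ (v n '' {i | (i : ℕ) < k})) x) atTop
        (𝓝 (projCLM (L' ⊔ Submodule.span ℂ (v' '' {i | (i : ℕ) < k})) x)) := by
    intro k hk
    induction k with
    | zero => simpa using hstrong
    | succ k ih =>
      simp only [Submodule.sup_span_image_lt_succ _ _ hk]
      exact tendsto_starProjection_sup_span_singleton_apply (ih (by omega)) (hvconv _)
        (hindep ⟨k, hk⟩)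
  have hall : {i : Fin m | (i : ℕ) < m} = Set.univ := Set.eq_univ_of_forall Fin.is_lt
  simpa [hall] using hprefix m le_rfl
end
end
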